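/- Let a_{m,t} = binomial(m−t,t−1) + 2·binomial(m−t−1,t−1) + binomial(m−t−2,t−1) and let F_ℓ(x) be the Fibonacci polynomials. Define A_r = F_m(r) + 2F_{m−1}(r) + F_{m−2}(r). Then for m ≥ 3, twice the sum over t from 3 to m of a_{m,t}·S(t,3) equals A_3 − 2A_2 + A_1, where S(t,3) is the Stirling number of the second kind. -/

import Mathlib

/-- Binomial coefficient on integer arguments, vanishing when either argument
is negative or when the lower index exceeds the upper index. -/
def ibinom (u v : ℤ) : ℤ :=
  if 0 ≤ u ∧ 0 ≤ v then (u.toNat.choose v.toNat : ℤ) else 0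

/-- `a_{m,t} = C(m-t, t-1) + 2·C(m-t-1, t-1) + C(m-t-2, t-1)`. -/
def aCoeff (m t : ℤ) : ℤ :=
  ibinom (m - t) (t - 1) + 2 * ibinom (m - t - 1) (t - 1) + ibinom (m - t - 2) (t - 1)

/-- Fibonacci polynomials evaluated at `x`. -/
def fibPoly (x : ℤ) : ℕ → ℤ
  | 0 => 0
  | 1 => 1
  | (n + 2) => fibPoly x (n + 1) + x * fibPoly x n

/-- Stirling numbers of the second kind. -/
def stirling2 : ℕ → ℕ → ℕ
  | 0, 0 => 1
  | 0, _ + 1 => 0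
  | _ + 1, 0 => 0
  | n + 1, k + 1 => (k + 1) * stirling2 n (k + 1) + stirling2 n k

/-- `A_r = F_m(r) + 2·F_{m-1}(r) + F_{m-2}(r)`. -/
def A (m : ℕ) (r : ℤ) : ℤ :=
  fibPoly r m + 2 * fibPoly r (m - 1) + fibPoly r (m - 2)

lemma ibinom_pascal (u v : ℤ) (h : 1 ≤ u ∨ 1 ≤ v) :
    ibinom u v = ibinom (u - 1) v + ibinom (u - 1) (v - 1) := by
  unfold ibinom
  rcases lt_trichotomy u 0 with hu | hu | hu
  · rw [if_neg, if_neg, if_neg] <;> omega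
  · subst hu
    rcases h with h | h
    · omega
    · rw [if_pos ⟨le_refl 0, by omega⟩, if_neg (by omega), if_neg (by omega)]
      rw [Nat.choose_eq_zero_of_lt (by omega)]; simp
  · rcases lt_trichotomy v 0 with hv | hv | hv
    · rw [if_neg (by omega), if_neg (by omega), if_neg (by omega)]; ring
    · subst hv
      rw [if_pos ⟨by omega, le_refl 0⟩, if_pos ⟨by omega, le_refl 0⟩, if_neg (by omega)]
      simp
    · rw [if_pos ⟨by omega, by omega⟩, if_pos ⟨by omega, by omega⟩, if_pos ⟨by omega, by omega⟩]
      have hu' : u.toNat = (u - 1).toNat + 1 := by omega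
      have hv' : v.toNat = (v - 1).toNat + 1 := by omega
      rw [hu', hv', Nat.choose_succ_succ]
      push_cast
      ring

lemma ibinom_neg_left (u v : ℤ) (h : u < 0) : ibinom u v = 0 := by
  unfold ibinom; rw [if_neg (by omega)]

lemma ibinom_neg_right (u v : ℤ) (h : v < 0) : ibinom u v = 0 := by
  unfold ibinom; rw [if_neg (by omega)]

lemma aCoeff_rec (m t : ℤ) (h : 2 ≤ t ∨ t + 1 ≤ m) :
    aCoeff (m + 2) t = aCoeff (m + 1) t + aCoeff m (t - 1) := by
  unfold aCoeff
  have h1 := ibinom_pascal (m + 2 - t) (t - 1) (by omega)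
  have h2 := ibinom_pascal (m + 1 - t) (t - 1) (by omega)
  have h3 := ibinom_pascal (m - t) (t - 1) (by omega)
  ring_nf at h1 h2 h3 ⊢
  linarith

lemma aCoeff_nonpos (m t : ℤ) (h : t ≤ 0) : aCoeff m t = 0 := by
  unfold aCoeff
  rw [ibinom_neg_right _ _ (by omega), ibinom_neg_right _ _ (by omega),
    ibinom_neg_right _ _ (by omega)]; ring

lemma aCoeff_zero_big (m t : ℤ) (h : m < t) : aCoeff m t = 0 := by
  unfold aCoeff
  rw [ibinom_neg_left _ _ (by omega), ibinom_neg_left _ _ (by omega),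
    ibinom_neg_left _ _ (by omega)]; ring

lemma A_rec (k : ℕ) (r : ℤ) : A (k + 5) r = A (k + 4) r + r * A (k + 3) r := by
  simp only [A, show k+5-1 = k+4 from rfl, show k+5-2 = k+3 from rfl,
    show k+4-1 = k+3 from rfl, show k+4-2 = k+2 from rfl,
    show k+3-1 = k+2 from rfl, show k+3-2 = k+1 from rfl]
  show fibPoly r (k+3+2) + 2 * fibPoly r (k+2+2) + fibPoly r (k+1+2) = _
  rw [show fibPoly r (k+3+2) = fibPoly r (k+4) + r * fibPoly r (k+3) from rfl,
    show fibPoly r (k+2+2) = fibPoly r (k+3) + r * fibPoly r (k+2) from rfl,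
    show fibPoly r (k+1+2) = fibPoly r (k+2) + r * fibPoly r (k+1) from rfl]
  ring

lemma key (n : ℕ) : ∀ r : ℤ,
    ∑ t ∈ Finset.range (n + 4), aCoeff ((n : ℤ) + 3) (t : ℤ) * r ^ t = r * A (n + 3) r := by
  induction n using Nat.strong_induction_on with
  | _ n ih =>
    match n with
    | 0 =>
      intro r
      simp only [Finset.sum_range_succ, Finset.range_one, Finset.sum_singleton]
      norm_num [aCoeff, ibinom, A, fibPoly, Int.toNat_natCast]
      simp only [show Nat.choose 0 (Int.toNat 2) = 0 from rfl]
      push_cast; ring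
    | 1 =>
      intro r
      simp only [Finset.sum_range_succ, Finset.range_one, Finset.sum_singleton]
      norm_num [aCoeff, ibinom, A, fibPoly, Int.toNat_natCast]
      simp only [show Nat.choose 0 (Int.toNat 2) = 0 from rfl,
        show Nat.choose 1 (Int.toNat 2) = 0 from rfl,
        show Nat.choose 0 (Int.toNat 3) = 0 from rfl]
      push_cast; ring
    | (k + 2) =>
      intro r
      have h1 := ih k (by omega) r
      have h2 := ih (k + 1) (by omega) r
      have step : ∀ t ∈ Finset.range (k + 2 + 4),
          aCoeff (((k + 2 : ℕ) : ℤ) + 3) (t : ℤ) * r ^ t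
            = aCoeff ((k : ℤ) + 4) t * r ^ t + aCoeff ((k : ℤ) + 3) ((t : ℤ) - 1) * r ^ t := by
        intro t _
        have : (((k + 2 : ℕ) : ℤ) + 3) = ((k : ℤ) + 3) + 2 := by push_cast; ring
        rw [this, aCoeff_rec _ _ (by omega)]
        have : (k : ℤ) + 3 + 1 = (k : ℤ) + 4 := by ring
        rw [this]; ring
      rw [Finset.sum_congr rfl step, Finset.sum_add_distrib,
        show k + 2 + 4 = k + 6 from rfl]
      have first : ∑ t ∈ Finset.range (k + 6), aCoeff ((k:ℤ) + 4) (t:ℤ) * r ^ t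
          = r * A (k + 4) r := by
        rw [Finset.sum_range_succ, aCoeff_zero_big _ _ (by push_cast; omega), zero_mul, add_zero]
        have : ((k:ℤ) + 4) = ((k+1 : ℕ) : ℤ) + 3 := by push_cast; ring
        rw [this]
        convert h2 using 2
      have second : ∑ t ∈ Finset.range (k + 6), aCoeff ((k:ℤ) + 3) ((t:ℤ) - 1) * r ^ t
          = r * (r * A (k + 3) r) := by
        rw [Finset.sum_range_succ']
        have e0 : aCoeff ((k:ℤ) + 3) (((0:ℕ):ℤ) - 1) * r ^ 0 = 0 := by
          rw [aCoeff_nonpos _ _ (by norm_num)]; ring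
        rw [e0, add_zero]
        have estep : ∀ s ∈ Finset.range (k + 5),
            aCoeff ((k:ℤ) + 3) (((s+1:ℕ):ℤ) - 1) * r ^ (s + 1)
              = r * (aCoeff ((k:ℤ) + 3) (s:ℤ) * r ^ s) := by
          intro s _
          push_cast
          rw [show (s:ℤ) + 1 - 1 = (s:ℤ) from by ring, pow_succ]
          ring
        rw [Finset.sum_congr rfl estep, ← Finset.mul_sum]
        congr 1
        rw [Finset.sum_range_succ, aCoeff_zero_big _ _ (by push_cast; omega), zero_mul, add_zero]
        have : ((k:ℤ) + 3) = ((k : ℕ) : ℤ) + 3 := rfl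
        rw [this, h1]
      rw [first, second, show k+2+3 = k+5 from rfl, A_rec]
      ring

lemma stirling2_one (t : ℕ) (h : 1 ≤ t) : stirling2 t 1 = 1 := by
  induction t, h using Nat.le_induction with
  | base => rfl
  | succ n hn ih =>
    show 1 * stirling2 n 1 + stirling2 n 0 = 1
    have h0 : stirling2 n 0 = 0 := by
      match n, hn with
      | (k+1), _ => rfl
    rw [ih, h0]

lemma stirling2_two (t : ℕ) (h : 1 ≤ t) : (stirling2 t 2 : ℤ) = 2 ^ (t - 1) - 1 := by
  induction t, h using Nat.le_induction with
  | base => rfl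
  | succ n hn ih =>
    show ((2 * stirling2 n 2 + stirling2 n 1 : ℕ) : ℤ) = _
    push_cast
    rw [ih, stirling2_one n hn]
    have p2 : (2 : ℤ) ^ n = 2 ^ (n - 1) * 2 := by
      rw [← pow_succ]; congr 1; omega
    rw [p2]; push_cast; ring

lemma stirling2_three (t : ℕ) (h : 1 ≤ t) :
    (2 * stirling2 t 3 : ℤ) = 3 ^ (t - 1) - 2 ^ t + 1 := by
  induction t, h using Nat.le_induction with
  | base => rfl
  | succ n hn ih =>
    show (2 : ℤ) * ((3 * stirling2 n 3 + stirling2 n 2 : ℕ) : ℤ) = _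
    push_cast
    have h2 := stirling2_two n hn
    have p3 : (3 : ℤ) ^ n = 3 ^ (n - 1) * 3 := by
      rw [← pow_succ]; congr 1; omega
    have p2 : (2 : ℤ) ^ n = 2 ^ (n - 1) * 2 := by
      rw [← pow_succ]; congr 1; omega
    have p2' : (2 : ℤ) ^ (n + 1) = 2 ^ n * 2 := pow_succ 2 n
    linarith [ih, h2, p3, p2, p2']

/-- For `m ≥ 3`, `2·∑_{t=3}^m a_{m,t}·S(t,3) = A₃ - 2·A₂ + A₁`. -/
theorem two_mul_sum_aCoeff_stirling (m : ℕ) (hm : 3 ≤ m) :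
    2 * ∑ t ∈ Finset.Icc 3 m, aCoeff (m : ℤ) (t : ℤ) * (stirling2 t 3 : ℤ) =
      A m 3 - 2 * A m 2 + A m 1 := by
  obtain ⟨n, rfl⟩ : ∃ n, m = n + 3 := ⟨m - 3, by omega⟩
  set M : ℤ := ((n + 3 : ℕ) : ℤ) with hM
  have hM' : M = (n : ℤ) + 3 := by rw [hM]; push_cast; ring
  have E3 := key n 3
  have E2 := key n 2
  have E1 := key n 1
  rw [← hM'] at E3 E2 E1
  -- Step A: pull the 2 inside and use the closed form for 2·S(t,3)
  rw [Finset.mul_sum]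
  have stepA : ∀ t ∈ Finset.Icc 3 (n + 3),
      2 * (aCoeff M (t : ℤ) * (stirling2 t 3 : ℤ))
        = aCoeff M (t : ℤ) * ((3:ℤ) ^ (t - 1) - 2 ^ t + 1) := by
    intro t ht
    have ht3 : 3 ≤ t := (Finset.mem_Icc.mp ht).1
    rw [← stirling2_three t (by omega)]
    ring
  rw [Finset.sum_congr rfl stepA]
  -- Step B: extend the sum to range (n+4)
  have stepB : ∑ t ∈ Finset.Icc 3 (n + 3), aCoeff M (t : ℤ) * ((3:ℤ) ^ (t - 1) - 2 ^ t + 1)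
      = ∑ t ∈ Finset.range (n + 4), aCoeff M (t : ℤ) * ((3:ℤ) ^ (t - 1) - 2 ^ t + 1) := by
    apply Finset.sum_subset
    · intro t ht
      rw [Finset.mem_range]
      have := (Finset.mem_Icc.mp ht).2
      omega
    · intro t ht hts
      rw [Finset.mem_range] at ht
      rw [Finset.mem_Icc] at hts
      push_neg at hts
      have ht3 : t < 3 := by omega
      interval_cases t
      · rw [aCoeff_nonpos _ _ (by norm_num)]; ring
      · norm_num
      · norm_num
  rw [stepB]
  -- Step C: split the sum into three
  have stepC : ∑ t ∈ Finset.range (n + 4), aCoeff M (t : ℤ) * ((3:ℤ) ^ (t - 1) - 2 ^ t + 1)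
      = (∑ t ∈ Finset.range (n + 4), aCoeff M (t : ℤ) * (3:ℤ) ^ (t - 1))
        - (∑ t ∈ Finset.range (n + 4), aCoeff M (t : ℤ) * (2:ℤ) ^ t)
        + (∑ t ∈ Finset.range (n + 4), aCoeff M (t : ℤ)) := by
    rw [← Finset.sum_sub_distrib, ← Finset.sum_add_distrib]
    apply Finset.sum_congr rfl
    intro t _
    ring
  rw [stepC]
  -- the three sums
  have S2 : ∑ t ∈ Finset.range (n + 4), aCoeff M (t : ℤ) * (2:ℤ) ^ t = 2 * A (n + 3) 2 := E2
  have S1 : ∑ t ∈ Finset.range (n + 4), aCoeff M (t : ℤ) = A (n + 3) 1 := by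
    have : ∀ t ∈ Finset.range (n + 4), aCoeff M (t : ℤ) = aCoeff M (t : ℤ) * (1:ℤ) ^ t := by
      intro t _; rw [one_pow, mul_one]
    rw [Finset.sum_congr rfl this, E1, one_mul]
  have S3 : ∑ t ∈ Finset.range (n + 4), aCoeff M (t : ℤ) * (3:ℤ) ^ (t - 1) = A (n + 3) 3 := by
    have h3 : (3:ℤ) * ∑ t ∈ Finset.range (n + 4), aCoeff M (t : ℤ) * (3:ℤ) ^ (t - 1)
        = (3:ℤ) * A (n + 3) 3 := by
      rw [← E3, Finset.mul_sum,
        Finset.sum_range_succ' (fun t => (3:ℤ) * (aCoeff M (t:ℤ) * (3:ℤ) ^ (t - 1))) (n+3),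
        Finset.sum_range_succ' (fun t => aCoeff M (t:ℤ) * (3:ℤ) ^ t) (n+3)]
      congr 1
      · apply Finset.sum_congr rfl
        intro s _
        rw [show s + 1 - 1 = s from rfl, pow_succ]
        ring
      · rw [show ((0:ℕ) : ℤ) = (0:ℤ) from rfl, aCoeff_nonpos _ _ (le_refl 0)]
        ring
    exact mul_left_cancel₀ (by norm_num : (3:ℤ) ≠ 0) h3
  rw [S2, S1, S3]
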